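/- Let (A, B) be an exact 3-separation of a matroid M whose strand graph component containing a given A-strand A₀ and B-strand B₀ (with ⊓(A₀, B₀) = 1) induces a complete bipartite graph. Let Z be a bunch of strands with at least two A-strands and at least two B-strands. Then Z is complete if and only if whenever Z contains A-strands A′, A″ and B-strands B′, B″ such that at least three of ⊓(A′, B′), ⊓(A′, B″), ⊓(A″, B′), ⊓(A″, B″) are one, all four are one. -/

import Mathlib

/-! The strand graph is bipartite, and the three-of-four condition closes every path
`S – U – W – X` starting at an `A`-strand `S` into an edge `S – X`. Hence every strand of the
bunch lies within distance two of `S`, and by bipartiteness a `B`-strand within distance two of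
`S` is adjacent to it. -/

open Set

variable {α : Type*}

/-- The rank of a set in a matroid: the supremum of cardinalities of independent subsets. -/
noncomputable def mRk (M : Matroid α) (X : Set α) : ℕ :=
  sSup (Set.ncard '' {I | M.Indep I ∧ I ⊆ X})

/-- Local connectivity `⊓(S, T) = r(S) + r(T) − r(S ∪ T)`. -/
noncomputable def mConn (M : Matroid α) (S T : Set α) : ℤ :=
  (mRk M S : ℤ) + (mRk M T : ℤ) - (mRk M (S ∪ T) : ℤ)

/-- A circuit: a minimal dependent set. -/
def mCircuit (M : Matroid α) (C : Set α) : Prop :=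
  M.Dep C ∧ ∀ D, D ⊂ C → ¬ M.Dep D

/-- `M'` is a single-element extension of `M` by the element `p`:
`p` is a new element, the ground set grows by `p`, and deleting `p` recovers `M`. -/
def ExtBy (M' M : Matroid α) (p : α) : Prop :=
  p ∉ M.E ∧ M'.E = insert p M.E ∧ M'.restrict M.E = M

/-- `M'` is an extension of `M` by the two new elements `x` and `y`. -/
def ExtBy2 (M' M : Matroid α) (x y : α) : Prop :=
  x ∉ M.E ∧ y ∉ M.E ∧ x ≠ y ∧ M'.E = insert x (insert y M.E) ∧ M'.restrict M.E = M

/-- `(A, B)` is an exact 3-separation of `M`: a partition of the ground set with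
`r(A) + r(B) − r(M) = 2`. -/
def Exact3Sep (M : Matroid α) (A B : Set α) : Prop :=
  Disjoint A B ∧ A ∪ B = M.E ∧
    (mRk M A : ℤ) + (mRk M B : ℤ) - (mRk M M.E : ℤ) = 2

/-- An `A`-strand relative to the separation `(A, B)`: a minimal subset `S` of `A` with
`⊓(S, B) = 1`. -/
def Strand (M : Matroid α) (A B S : Set α) : Prop :=
  S ⊆ A ∧ mConn M S B = 1 ∧ ∀ S', S' ⊂ S → mConn M S' B ≠ 1

/-- `e` and `f` are clones: interchanging them is an automorphism of `M`. -/
def mClones [DecidableEq α] (M : Matroid α) (e f : α) : Prop :=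
  M.mapEquiv (Equiv.swap e f) = M

/-- `e` and `f` are independent clones. -/
def mIndepClones [DecidableEq α] (M : Matroid α) (e f : α) : Prop :=
  mClones M e f ∧ M.Indep {e, f}

/-- `z` is fixed in `M`: there is no extension of `M` by an element `z'` in which
`z` and `z'` are independent clones. -/
def mFixed [DecidableEq α] (M : Matroid α) (z : α) : Prop :=
  ¬ ∃ (M' : Matroid α) (z' : α), ExtBy M' M z' ∧ mIndepClones M' z z'

/-- `M''` is obtained from `M` by freely adding the independent clones `x` and `y`
to the guts line of the separation `(A, B)`. -/
def GutsPairExt [DecidableEq α] (M'' M : Matroid α) (A B : Set α) (x y : α) : Prop :=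
  ExtBy2 M'' M x y ∧ mIndepClones M'' x y ∧
    ({x, y} : Set α) ⊆ M''.closure A ∩ M''.closure B

/-- Contraction of the set `C` from `M`, defined by duality. -/
noncomputable def mContract (M : Matroid α) (C : Set α) : Matroid α :=
  (M.dual.restrict (M.E \ C)).dual

/-- `S` is a separator of the matroid `N`. -/
def mSeparator (N : Matroid α) (S : Set α) : Prop :=
  (mRk N S : ℤ) + (mRk N (N.E \ S) : ℤ) = (mRk N N.E : ℤ)

/-- Adjacency in the strand graph of `(M, A, B)`: a strand on one side is adjacent to a
strand on the other side when their local connectivity is one. -/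
def StrandAdj (M : Matroid α) (A B : Set α) (S T : Set α) : Prop :=
  ((Strand M A B S ∧ Strand M B A T) ∨ (Strand M B A S ∧ Strand M A B T)) ∧ mConn M S T = 1

/-- Exactly two of the three integers are equal to one. -/
def ExactlyTwoOne (a b c : ℤ) : Prop :=
  (a = 1 ∧ b = 1 ∧ c ≠ 1) ∨ (a = 1 ∧ c = 1 ∧ b ≠ 1) ∨ (b = 1 ∧ c = 1 ∧ a ≠ 1)

theorem Relation.ReflTransGen.eq_or_rel_or_rel_rel {β : Type*} {r : β → β → Prop} {a b : β}
    (hclose : ∀ x y z, r a x → r x y → r y z → r a z) (hab : Relation.ReflTransGen r a b) :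
    b = a ∨ r a b ∨ ∃ c, r a c ∧ r c b := by
  induction hab with
  | refl => exact Or.inl rfl
  | tail _ hbc ih =>
    right
    rcases ih with rfl | hab | ⟨c, hac, hcb⟩
    · exact Or.inl hbc
    · exact Or.inr ⟨_, hab, hbc⟩
    · exact Or.inl (hclose _ _ _ hac hcb hbc)

def ThreeOfFourClosed (M : Matroid α) (A B : Set α) (Z : Set (Set α)) : Prop :=
  ∀ A' A'' B' B'' : Set α, A' ∈ Z → A'' ∈ Z → B' ∈ Z → B'' ∈ Z →
    Strand M A B A' → Strand M A B A'' → Strand M B A B' → Strand M B A B'' →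
    ((mConn M A' B' = 1 ∧ mConn M A' B'' = 1 ∧ mConn M A'' B' = 1) ∨
     (mConn M A' B' = 1 ∧ mConn M A' B'' = 1 ∧ mConn M A'' B'' = 1) ∨
     (mConn M A' B' = 1 ∧ mConn M A'' B' = 1 ∧ mConn M A'' B'' = 1) ∨
     (mConn M A' B'' = 1 ∧ mConn M A'' B' = 1 ∧ mConn M A'' B'' = 1)) →
    (mConn M A' B' = 1 ∧ mConn M A' B'' = 1 ∧
     mConn M A'' B' = 1 ∧ mConn M A'' B'' = 1)

section StrandGraph

variable {M : Matroid α} {A B S T U W X : Set α}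

lemma mRk_empty (M : Matroid α) : mRk M ∅ = 0 := by
  have h : {I | M.Indep I ∧ I ⊆ (∅ : Set α)} = {∅} := by
    ext I
    constructor
    · rintro ⟨-, h⟩
      exact subset_empty_iff.mp h
    · rintro rfl
      exact ⟨M.empty_indep, rfl.subset⟩
  rw [mRk, h]
  simp

lemma mConn_comm (M : Matroid α) (S T : Set α) : mConn M S T = mConn M T S := by
  simp only [mConn, union_comm]
  ring

lemma mConn_empty_left (M : Matroid α) (T : Set α) : mConn M ∅ T = 0 := by
  simp [mConn, mRk_empty]

lemma Strand.not_strand_swap (hAB : Disjoint A B) (hS : Strand M A B S) :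
    ¬ Strand M B A S := by
  intro hS'
  have hempty : S = ∅ := subset_empty_iff.mp (hAB.inter_eq ▸ subset_inter hS.1 hS'.1)
  have hconn := hS.2.1
  rw [hempty, mConn_empty_left] at hconn
  exact zero_ne_one hconn

instance : Std.Symm (StrandAdj M A B) where
  symm S T := by
    rintro ⟨hsides, hconn⟩
    exact ⟨hsides.symm.imp And.symm And.symm, mConn_comm M S T ▸ hconn⟩

lemma StrandAdj.swap (h : StrandAdj M A B S T) : StrandAdj M B A S T :=
  ⟨h.1.symm, h.2⟩

lemma StrandAdj.strand_right (hAB : Disjoint A B) (h : StrandAdj M A B S T)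
    (hS : Strand M A B S) : Strand M B A T := by
  rcases h.1 with ⟨-, hT⟩ | ⟨hS', -⟩
  · exact hT
  · exact absurd hS' (hS.not_strand_swap hAB)

lemma StrandAdj.strand_right' (hAB : Disjoint A B) (h : StrandAdj M A B S T)
    (hS : Strand M B A S) : Strand M A B T :=
  h.swap.strand_right hAB.symm hS

lemma strandAdj_of_path {Z : Set (Set α)} (hAB : Disjoint A B) (hZ : ThreeOfFourClosed M A B Z)
    (hZadj : ∀ W W', W ∈ Z → StrandAdj M A B W W' → W' ∈ Z)
    (hS : Strand M A B S) (hSZ : S ∈ Z)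
    (hSU : StrandAdj M A B S U) (hUW : StrandAdj M A B U W) (hWX : StrandAdj M A B W X) :
    StrandAdj M A B S X := by
  have hU := hSU.strand_right hAB hS
  have hW := hUW.strand_right' hAB hU
  have hX := hWX.strand_right hAB hW
  have hUZ := hZadj _ _ hSZ hSU
  have hWZ := hZadj _ _ hUZ hUW
  have hXZ := hZadj _ _ hWZ hWX
  have hWU : mConn M W U = 1 := mConn_comm M W U ▸ hUW.2
  exact ⟨Or.inl ⟨hS, hX⟩,
    (hZ S W U X hSZ hWZ hUZ hXZ hS hW hU hX (Or.inr (Or.inr (Or.inl ⟨hSU.2, hWU, hWX.2⟩)))).2.1⟩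

lemma mConn_eq_one_of_threeOfFourClosed {S₀ : Set α} (hAB : Disjoint A B)
    (hZ : ThreeOfFourClosed M A B {W | Relation.ReflTransGen (StrandAdj M A B) S₀ W})
    (hSZ : Relation.ReflTransGen (StrandAdj M A B) S₀ S)
    (hTZ : Relation.ReflTransGen (StrandAdj M A B) S₀ T)
    (hS : Strand M A B S) (hT : Strand M B A T) : mConn M S T = 1 := by
  have hST : Relation.ReflTransGen (StrandAdj M A B) S T := (symm hSZ).trans hTZ
  have hclose (U W X : Set α) := strandAdj_of_path (U := U) (W := W) (X := X) hAB hZ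
    (fun _ _ hW hWW' => hW.tail hWW') hS hSZ
  rcases hST.eq_or_rel_or_rel_rel hclose with rfl | hST | ⟨U, hSU, hUT⟩
  · exact absurd hT (hS.not_strand_swap hAB)
  · exact hST.2
  · exact absurd hT ((hUT.strand_right' hAB (hSU.strand_right hAB hS)).not_strand_swap hAB)

end StrandGraph

theorem bunch_complete_iff_general (M : Matroid α) (A B : Set α) (Z : Set (Set α))
    (hsep : Exact3Sep M A B)
    (hbunch : ∃ S T : Set α, StrandAdj M A B S T ∧
      Z = {W | Relation.ReflTransGen (StrandAdj M A B) S W}) :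
    (∀ S T : Set α, S ∈ Z → T ∈ Z → Strand M A B S → Strand M B A T → mConn M S T = 1) ↔
    (∀ A' A'' B' B'' : Set α, A' ∈ Z → A'' ∈ Z → B' ∈ Z → B'' ∈ Z →
      Strand M A B A' → Strand M A B A'' → Strand M B A B' → Strand M B A B'' →
      ((mConn M A' B' = 1 ∧ mConn M A' B'' = 1 ∧ mConn M A'' B' = 1) ∨
       (mConn M A' B' = 1 ∧ mConn M A' B'' = 1 ∧ mConn M A'' B'' = 1) ∨
       (mConn M A' B' = 1 ∧ mConn M A'' B' = 1 ∧ mConn M A'' B'' = 1) ∨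
       (mConn M A' B'' = 1 ∧ mConn M A'' B' = 1 ∧ mConn M A'' B'' = 1)) →
      (mConn M A' B' = 1 ∧ mConn M A' B'' = 1 ∧
       mConn M A'' B' = 1 ∧ mConn M A'' B'' = 1)) := by
  obtain ⟨S₀, -, -, rfl⟩ := hbunch
  constructor
  · intro hcomplete A' A'' B' B'' hA' hA'' hB' hB'' sA' sA'' sB' sB'' _
    exact ⟨hcomplete _ _ hA' hB' sA' sB', hcomplete _ _ hA' hB'' sA' sB'',
      hcomplete _ _ hA'' hB' sA'' sB', hcomplete _ _ hA'' hB'' sA'' sB''⟩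
  · exact fun hZ S T => mConn_eq_one_of_threeOfFourClosed hsep.1 hZ

/-- A bunch of strands with at least two strands on each side is complete iff whenever at
least three of the four cross local connectivities among two `A`-strands and two
`B`-strands in the bunch are one, all four are one. -/
theorem bunch_complete_iff (M : Matroid α) (A B A₀ B₀ : Set α) (Z : Set (Set α))
    (hsep : Exact3Sep M A B)
    (hA₀ : Strand M A B A₀) (hB₀ : Strand M B A B₀) (hconn : mConn M A₀ B₀ = 1)
    (hcomp : ∀ S T : Set α,
      Relation.ReflTransGen (StrandAdj M A B) A₀ S →
      Relation.ReflTransGen (StrandAdj M A B) A₀ T →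
      Strand M A B S → Strand M B A T → mConn M S T = 1)
    (hbunch : ∃ S T : Set α, StrandAdj M A B S T ∧
      Z = {W | Relation.ReflTransGen (StrandAdj M A B) S W})
    (htwoA : ∃ S₁ S₂, S₁ ∈ Z ∧ S₂ ∈ Z ∧ S₁ ≠ S₂ ∧ Strand M A B S₁ ∧ Strand M A B S₂)
    (htwoB : ∃ T₁ T₂, T₁ ∈ Z ∧ T₂ ∈ Z ∧ T₁ ≠ T₂ ∧ Strand M B A T₁ ∧ Strand M B A T₂) :
    (∀ S T : Set α, S ∈ Z → T ∈ Z → Strand M A B S → Strand M B A T → mConn M S T = 1) ↔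
    (∀ A' A'' B' B'' : Set α, A' ∈ Z → A'' ∈ Z → B' ∈ Z → B'' ∈ Z →
      Strand M A B A' → Strand M A B A'' → Strand M B A B' → Strand M B A B'' →
      ((mConn M A' B' = 1 ∧ mConn M A' B'' = 1 ∧ mConn M A'' B' = 1) ∨
       (mConn M A' B' = 1 ∧ mConn M A' B'' = 1 ∧ mConn M A'' B'' = 1) ∨
       (mConn M A' B' = 1 ∧ mConn M A'' B' = 1 ∧ mConn M A'' B'' = 1) ∨
       (mConn M A' B'' = 1 ∧ mConn M A'' B' = 1 ∧ mConn M A'' B'' = 1)) →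
      (mConn M A' B' = 1 ∧ mConn M A' B'' = 1 ∧
       mConn M A'' B' = 1 ∧ mConn M A'' B'' = 1)) :=
  bunch_complete_iff_general M A B Z hsep hbunch
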